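/- Let X_1, …, X_d be n-by-n real matrices with ‖Σ_i X_i ⊗ X_i‖ < 1 for a consistent matrix norm, and let P = [(I − Σ_i X_i ⊗ X_i)^{-1}]^ψ. Then an n-by-n matrix Z lies in the unital subalgebra of M_n(ℝ) generated by X_1, …, X_d if and only if vec Z lies in the range of P. -/

import Mathlib

/-!
Write `S = ∑ᵢ Xᵢ ⊗ Xᵢ`. As `(A ⊗ A)(B ⊗ B) = AB ⊗ AB`, the power `S ^ k` is the sum of
`X_w ⊗ X_w` over the words `w` of length `k`, and `ψ (X_w ⊗ X_w) = vec X_w (vec X_w)ᵀ`. The norm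
condition forces `S ^ N → 0`, so `1 - S` is invertible and `P = ψ (1 - S)⁻¹` is the sum of
`vec X_w (vec X_w)ᵀ` over all words. Hence the range of `P` lies in the span `V` of the `vec X_w`,
which is `vec` of the algebra; and `P u = 0` gives `0 = uᵀ P u = ∑_w (vec X_w ⬝ u)²`, so `P` is
injective on `V`, hence maps the finite-dimensional `V` onto itself.
-/

open Matrix Kronecker

/-- `vec` stacks the columns of a matrix into a single column vector. -/
def vec {n : ℕ} (A : Matrix (Fin n) (Fin n) ℝ) : Fin n × Fin n → ℝ :=
  fun p => A p.1 p.2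

/-- The ψ-involution on n²-by-n² matrices. -/
def psi {n : ℕ} (A : Matrix (Fin n × Fin n) (Fin n × Fin n) ℝ) :
    Matrix (Fin n × Fin n) (Fin n × Fin n) ℝ :=
  fun p q => A (p.1, q.1) (p.2, q.2)

open Filter Topology Finset

section Words

variable {M ι : Type*} [Monoid M] (f : ι → M)

def word {k : ℕ} (w : Fin k → ι) : M :=
  (List.ofFn fun j => f (w j)).prod

@[simp]
lemma word_zero (w : Fin 0 → ι) : word f w = 1 := by
  simp [word]

lemma word_cons {k : ℕ} (i : ι) (w : Fin k → ι) :
    word f (Fin.cons i w : Fin (k + 1) → ι) = f i * word f w := by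
  simp [word, List.ofFn_succ]

lemma Submonoid.coe_closure_range_eq_range_word :
    (Submonoid.closure (Set.range f) : Set M) = Set.range fun w : Σ k, Fin k → ι => word f w.2 := by
  rw [← FreeMonoid.mrange_lift]
  ext x
  constructor
  · rintro ⟨l, rfl⟩
    exact ⟨⟨_, l.toList.get⟩, by simp [word, FreeMonoid.lift_apply]⟩
  · rintro ⟨⟨k, w⟩, rfl⟩
    exact ⟨FreeMonoid.ofList (List.ofFn w),
      by simp [word, FreeMonoid.lift_apply, List.map_ofFn, Function.comp_def]⟩

end Words

lemma sum_pow_eq_sum_word {R ι : Type*} [Semiring R] [Fintype ι] (f : ι → R) (k : ℕ) :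
    (∑ i, f i) ^ k = ∑ w : Fin k → ι, word f w := by
  induction k with
  | zero => simp
  | succ k ih =>
    rw [pow_succ', ih, Finset.sum_mul_sum, ← (Fin.consEquiv fun _ => ι).sum_comp,
      Fintype.sum_prod_type]
    exact sum_congr rfl fun i _ => sum_congr rfl fun w _ => (word_cons f i w).symm

lemma word_kronecker_self {m ι R : Type*} [Fintype m] [DecidableEq m] [CommSemiring R]
    (X : ι → Matrix m m R) {k : ℕ} (w : Fin k → ι) :
    word (fun i => X i ⊗ₖ X i) w = word X w ⊗ₖ word X w := by
  induction k with
  | zero => simp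
  | succ k ih => rw [← Fin.cons_self_tail w, word_cons, word_cons, ih, mul_kronecker_mul]

section SubmultiplicativeNorm

variable {m : Type*} [Fintype m] [DecidableEq m] {ν : Matrix m m ℝ → ℝ}

lemma abs_apply_mul_single_le (hnonneg : ∀ A, 0 ≤ ν A) (hsmul : ∀ (c : ℝ) A, ν (c • A) = |c| * ν A)
    (hsubmul : ∀ A B, ν (A * B) ≤ ν A * ν B) (M : Matrix m m ℝ) (p q : m) :
    |M p q| * ν (single p q 1) ≤ ν (single p p 1) * ν (single q q 1) * ν M :=
  calc |M p q| * ν (single p q 1) = ν (single p p 1 * M * single q q 1) := by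
        rw [← hsmul, smul_single, single_mul_mul_single, smul_eq_mul, mul_one, one_mul, mul_one]
    _ ≤ ν (single p p 1 * M) * ν (single q q 1) := hsubmul _ _
    _ ≤ ν (single p p 1) * ν M * ν (single q q 1) :=
        mul_le_mul_of_nonneg_right (hsubmul _ _) (hnonneg _)
    _ = ν (single p p 1) * ν (single q q 1) * ν M := by ring

lemma tendsto_nhds_zero_of_tendsto_submultiplicative (hnonneg : ∀ A, 0 ≤ ν A)
    (hdef : ∀ A, ν A = 0 → A = 0) (hsmul : ∀ (c : ℝ) A, ν (c • A) = |c| * ν A)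
    (hsubmul : ∀ A B, ν (A * B) ≤ ν A * ν B) {α : Type*} {l : Filter α} {M : α → Matrix m m ℝ}
    (hM : Tendsto (fun a => ν (M a)) l (𝓝 0)) : Tendsto M l (𝓝 0) := by
  refine tendsto_pi_nhds.2 fun p => tendsto_pi_nhds.2 fun q => ?_
  have hpos : 0 < ν (single p q 1) := (hnonneg _).lt_of_ne' fun h => by
    simpa using congr_fun₂ (hdef _ h) p q
  refine squeeze_zero_norm (fun a => ?_)
    (by simpa using hM.const_mul (ν (single p p 1) * ν (single q q 1) / ν (single p q 1)))
  rw [Real.norm_eq_abs, div_mul_eq_mul_div, le_div_iff₀ hpos]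
  exact abs_apply_mul_single_le hnonneg hsmul hsubmul (M a) p q

lemma le_pow_mul_of_submultiplicative (hnonneg : ∀ A, 0 ≤ ν A)
    (hsubmul : ∀ A B, ν (A * B) ≤ ν A * ν B) (S B : Matrix m m ℝ) (N : ℕ) :
    ν (S ^ N * B) ≤ ν S ^ N * ν B := by
  induction N with
  | zero => simp
  | succ N ih =>
    calc ν (S ^ (N + 1) * B) = ν (S * (S ^ N * B)) := by rw [pow_succ', Matrix.mul_assoc]
      _ ≤ ν S * (ν S ^ N * ν B) := (hsubmul _ _).trans (mul_le_mul_of_nonneg_left ih (hnonneg S))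
      _ = ν S ^ (N + 1) * ν B := by ring

lemma tendsto_pow_mul_nhds_zero_of_submultiplicative (hnonneg : ∀ A, 0 ≤ ν A)
    (hdef : ∀ A, ν A = 0 → A = 0) (hsmul : ∀ (c : ℝ) A, ν (c • A) = |c| * ν A)
    (hsubmul : ∀ A B, ν (A * B) ≤ ν A * ν B) {S : Matrix m m ℝ} (hS : ν S < 1)
    (B : Matrix m m ℝ) : Tendsto (fun N => S ^ N * B) atTop (𝓝 0) := by
  refine tendsto_nhds_zero_of_tendsto_submultiplicative hnonneg hdef hsmul hsubmul ?_
  refine squeeze_zero (fun _ => hnonneg _) (le_pow_mul_of_submultiplicative hnonneg hsubmul S B) ?_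
  simpa using (tendsto_pow_atTop_nhds_zero_of_lt_one (hnonneg S) hS).mul_const (ν B)

end SubmultiplicativeNorm

lemma Matrix.isUnit_det_one_sub_of_tendsto_pow {m R : Type*} [Fintype m] [DecidableEq m]
    [Field R] [TopologicalSpace R] [IsTopologicalRing R] [T2Space R] {S : Matrix m m R}
    (hS : Tendsto (fun N => S ^ N) atTop (𝓝 0)) : IsUnit (1 - S).det := by
  rw [isUnit_iff_ne_zero]
  intro hdet
  obtain ⟨v, hv0, hv⟩ := exists_mulVec_eq_zero_iff.2 hdet
  have hfix : ∀ N, S ^ N *ᵥ v = v := by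
    have hSv : S *ᵥ v = v := by rwa [sub_mulVec, one_mulVec, sub_eq_zero, eq_comm] at hv
    intro N
    induction N with
    | zero => simp
    | succ N ih => rw [pow_succ', ← mulVec_mulVec, ih, hSv]
  have hlim := ((continuous_id.matrix_mulVec (continuous_const (y := v))).tendsto 0).comp hS
  simp only [Function.comp_def, id, hfix, zero_mulVec] at hlim
  exact hv0 (tendsto_nhds_unique tendsto_const_nhds hlim)

lemma geom_sum_eq_sub_pow_mul {R : Type*} [Ring R] {s q : R} (h : (1 - s) * q = 1) (N : ℕ) :
    ∑ k ∈ range N, s ^ k = q - s ^ N * q :=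
  calc ∑ k ∈ range N, s ^ k = (∑ k ∈ range N, s ^ k) * ((1 - s) * q) := by rw [h, mul_one]
    _ = q - s ^ N * q := by rw [← mul_assoc, geom_sum_mul_neg, sub_mul, one_mul]

lemma Submodule.le_range_of_mapsTo_of_disjoint_ker {K V : Type*} [Field K] [AddCommGroup V]
    [Module K V] (f : V →ₗ[K] V) (p : Submodule K V) [FiniteDimensional K p]
    (hmaps : ∀ x ∈ p, f x ∈ p) (hker : Disjoint p (LinearMap.ker f)) : p ≤ LinearMap.range f := by
  intro x hx
  have hinj : Function.Injective (f.restrict hmaps) := by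
    rw [← LinearMap.ker_eq_bot, LinearMap.ker_eq_bot']
    intro y hy
    exact Subtype.ext (Submodule.disjoint_def.1 hker y y.2 (congrArg Subtype.val hy))
  obtain ⟨y, hy⟩ := LinearMap.injective_iff_surjective.1 hinj ⟨x, hx⟩
  exact ⟨y, congrArg Subtype.val hy⟩

lemma dotProduct_eq_zero_of_mem_span {m : Type*} [Fintype m] {s : Set (m → ℝ)} {u x : m → ℝ}
    (hx : x ∈ Submodule.span ℝ s) (hs : ∀ g ∈ s, g ⬝ᵥ u = 0) : x ⬝ᵥ u = 0 := by
  induction hx using Submodule.span_induction with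
  | mem g hg => exact hs g hg
  | zero => simp
  | add a b _ _ ha hb => rw [add_dotProduct, ha, hb, add_zero]
  | smul c a _ ha => rw [smul_dotProduct, ha, smul_zero]

section RankOneSums

variable {m : Type*} [Fintype m] {ι : ℕ → Type*} [∀ k, Fintype (ι k)] {v : (k : ℕ) → ι k → m → ℝ}
  {P : Matrix m m ℝ}

lemma mulVec_mem_span_of_tendsto
    (hP : Tendsto (fun N => ∑ k ∈ range N, ∑ i, vecMulVec (v k i) (v k i)) atTop (𝓝 P))
    (u : m → ℝ) : P *ᵥ u ∈ Submodule.span ℝ (Set.range fun x : Σ k, ι k => v x.1 x.2) := by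
  have hlim : Tendsto (fun N => (∑ k ∈ range N, ∑ i, vecMulVec (v k i) (v k i)) *ᵥ u)
      atTop (𝓝 (P *ᵥ u)) :=
    ((continuous_id.matrix_mulVec continuous_const).tendsto P).comp hP
  refine (Submodule.closed_of_finiteDimensional _).mem_of_tendsto hlim (Eventually.of_forall ?_)
  intro N
  simp only [sum_mulVec, vecMulVec_mulVec, op_smul_eq_smul]
  exact sum_mem fun k _ => sum_mem fun i _ =>
    Submodule.smul_mem _ _ (Submodule.subset_span ⟨⟨k, i⟩, rfl⟩)

lemma dotProduct_eq_zero_of_mulVec_eq_zero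
    (hP : Tendsto (fun N => ∑ k ∈ range N, ∑ i, vecMulVec (v k i) (v k i)) atTop (𝓝 P))
    {u : m → ℝ} (hu : P *ᵥ u = 0) (k : ℕ) (i : ι k) : v k i ⬝ᵥ u = 0 := by
  have hquad : Tendsto (fun N => u ⬝ᵥ (∑ k ∈ range N, ∑ i, vecMulVec (v k i) (v k i)) *ᵥ u)
      atTop (𝓝 (u ⬝ᵥ P *ᵥ u)) :=
    ((continuous_const.dotProduct (continuous_id.matrix_mulVec continuous_const)).tendsto P).comp hP
  simp only [hu, dotProduct_zero, sum_mulVec, vecMulVec_mulVec,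
    op_smul_eq_smul, dotProduct_sum, dotProduct_smul, smul_eq_mul] at hquad
  have hsum : HasSum (fun k => ∑ i, (v k i ⬝ᵥ u) ^ 2) 0 := by
    refine (hasSum_iff_tendsto_nat_of_nonneg (fun k => sum_nonneg fun i _ => sq_nonneg _) 0).2 ?_
    simpa only [sq, dotProduct_comm u] using hquad
  have hk := congr_fun ((hasSum_zero_iff_of_nonneg fun k => sum_nonneg fun i _ => sq_nonneg _).1
    hsum) k
  exact pow_eq_zero_iff two_ne_zero |>.1 <|
    (sum_eq_zero_iff_of_nonneg fun i _ => sq_nonneg _).1 hk i (mem_univ i)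

theorem range_mulVecLin_eq_span_of_tendsto
    (hP : Tendsto (fun N => ∑ k ∈ range N, ∑ i, vecMulVec (v k i) (v k i)) atTop (𝓝 P)) :
    LinearMap.range P.mulVecLin = Submodule.span ℝ (Set.range fun x : Σ k, ι k => v x.1 x.2) := by
  refine le_antisymm ?_ (Submodule.le_range_of_mapsTo_of_disjoint_ker _ _
    (fun x _ => mulVec_mem_span_of_tendsto hP x) (Submodule.disjoint_def.2 fun x hx hker => ?_))
  · rintro _ ⟨u, rfl⟩
    exact mulVec_mem_span_of_tendsto hP u
  · refine dotProduct_self_eq_zero.1 (dotProduct_eq_zero_of_mem_span hx ?_)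
    rintro _ ⟨⟨k, i⟩, rfl⟩
    exact dotProduct_eq_zero_of_mulVec_eq_zero hP hker k i

end RankOneSums

section VecPsi

variable {n : ℕ}

def vecEquiv : Matrix (Fin n) (Fin n) ℝ ≃ₗ[ℝ] (Fin n × Fin n → ℝ) where
  toFun := _root_.vec
  invFun v := Matrix.of fun i j => v (i, j)
  map_add' _ _ := rfl
  map_smul' _ _ := rfl
  left_inv _ := rfl
  right_inv _ := rfl

def psiLinearMap :
    Matrix (Fin n × Fin n) (Fin n × Fin n) ℝ →ₗ[ℝ] Matrix (Fin n × Fin n) (Fin n × Fin n) ℝ where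
  toFun := psi
  map_add' _ _ := rfl
  map_smul' _ _ := rfl

lemma psi_sum {ι : Type*} (s : Finset ι) (A : ι → Matrix (Fin n × Fin n) (Fin n × Fin n) ℝ) :
    psi (∑ i ∈ s, A i) = ∑ i ∈ s, psi (A i) :=
  map_sum psiLinearMap A s

lemma continuous_psi : Continuous (psi : Matrix (Fin n × Fin n) (Fin n × Fin n) ℝ → _) :=
  LinearMap.continuous_of_finiteDimensional psiLinearMap

lemma psi_kronecker (A B : Matrix (Fin n) (Fin n) ℝ) :
    psi (A ⊗ₖ B) = vecMulVec (_root_.vec A) (_root_.vec B) :=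
  rfl

lemma psi_sum_kronecker_pow {d : ℕ} (X : Fin d → Matrix (Fin n) (Fin n) ℝ) (k : ℕ) :
    psi ((∑ i, X i ⊗ₖ X i) ^ k) =
      ∑ w : Fin k → Fin d, vecMulVec (_root_.vec (word X w)) (_root_.vec (word X w)) := by
  simp only [sum_pow_eq_sum_word, psi_sum, word_kronecker_self, psi_kronecker]

lemma vec_mem_span_range_vec_iff {ι : Type*} (f : ι → Matrix (Fin n) (Fin n) ℝ)
    (Z : Matrix (Fin n) (Fin n) ℝ) :
    _root_.vec Z ∈ Submodule.span ℝ (Set.range fun i => _root_.vec (f i)) ↔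
      Z ∈ Submodule.span ℝ (Set.range f) := by
  rw [show (Set.range fun i => _root_.vec (f i)) = (vecEquiv (n := n)).toLinearMap '' Set.range f
    from Set.range_comp vecEquiv.toLinearMap f, Submodule.span_image, Submodule.mem_map_equiv]
  rfl

end VecPsi

theorem mem_algebra_iff_vec_mem_range_general {n d : ℕ} (X : Fin d → Matrix (Fin n) (Fin n) ℝ)
    (ν : Matrix (Fin n × Fin n) (Fin n × Fin n) ℝ → ℝ)
    (hnonneg : ∀ A, 0 ≤ ν A)
    (hdef : ∀ A, ν A = 0 → A = 0)
    (hsmul : ∀ (c : ℝ) A, ν (c • A) = |c| * ν A)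
    (hsubmul : ∀ A B, ν (A * B) ≤ ν A * ν B)
    (hlt : ν (∑ i, X i ⊗ₖ X i) < 1) :
    ∀ Z : Matrix (Fin n) (Fin n) ℝ,
      Z ∈ Algebra.adjoin ℝ (Set.range X) ↔
        _root_.vec Z ∈ LinearMap.range (psi (1 - ∑ i, X i ⊗ₖ X i)⁻¹).mulVecLin := by
  intro Z
  set S := ∑ i, X i ⊗ₖ X i
  have hpow := tendsto_pow_mul_nhds_zero_of_submultiplicative hnonneg hdef hsmul hsubmul hlt
  have hinv : (1 - S) * (1 - S)⁻¹ = 1 :=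
    mul_nonsing_inv _ (isUnit_det_one_sub_of_tendsto_pow (by simpa using hpow 1))
  have hpartial : Tendsto (fun N => ∑ k ∈ range N, ∑ w : Fin k → Fin d,
      vecMulVec (_root_.vec (word X w)) (_root_.vec (word X w))) atTop (𝓝 (psi (1 - S)⁻¹)) := by
    have hlim := (continuous_psi.tendsto _).comp ((hpow (1 - S)⁻¹).const_sub (1 - S)⁻¹)
    rw [sub_zero] at hlim
    refine hlim.congr fun N => ?_
    rw [Function.comp_apply, ← geom_sum_eq_sub_pow_mul hinv, psi_sum]
    exact sum_congr rfl fun k _ => psi_sum_kronecker_pow X k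
  rw [range_mulVecLin_eq_span_of_tendsto hpartial, vec_mem_span_range_vec_iff,
    ← Subalgebra.mem_toSubmodule, Algebra.adjoin_eq_span, Submonoid.coe_closure_range_eq_range_word]

theorem mem_algebra_iff_vec_mem_range {n d : ℕ} (X : Fin d → Matrix (Fin n) (Fin n) ℝ)
    (ν : Matrix (Fin n × Fin n) (Fin n × Fin n) ℝ → ℝ)
    (hnonneg : ∀ A, 0 ≤ ν A)
    (hdef : ∀ A, ν A = 0 → A = 0)
    (htri : ∀ A B, ν (A + B) ≤ ν A + ν B)
    (hsmul : ∀ (c : ℝ) A, ν (c • A) = |c| * ν A)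
    (hsubmul : ∀ A B, ν (A * B) ≤ ν A * ν B)
    (hlt : ν (∑ i, X i ⊗ₖ X i) < 1) :
    ∀ Z : Matrix (Fin n) (Fin n) ℝ,
      Z ∈ Algebra.adjoin ℝ (Set.range X) ↔
        _root_.vec Z ∈ LinearMap.range (psi (1 - ∑ i, X i ⊗ₖ X i)⁻¹).mulVecLin :=
  mem_algebra_iff_vec_mem_range_general X ν hnonneg hdef hsmul hsubmul hlt
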